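/- Let R and S be two rings, T a right R-module, E an R-S-bimodule, and κ a regular cardinal. If T is κ-presentable as a right R-module and E is κ-presentable as a right S-module, then the right S-module T ⊗_R E is κ-presentable. -/

import Mathlib

/-! Choose presentations `(ι →₀ Rᵐᵒᵖ) --f--> (σ →₀ Rᵐᵒᵖ) --qT--> T` and
`(ι' →₀ Sᵐᵒᵖ) --g--> (σ' →₀ Sᵐᵒᵖ) --qE--> E` with fewer than `κ` generators and relations.
Then `T ⊗_R E` is generated by the elements `qT eⱼ ⊗ qE eⱼ'`, indexed by `σ × σ'`, and by right
exactness of the tensor product the relations among them are generated by the `eⱼ ⊗ g eᵢ'` and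
by lifts of the `f eᵢ ⊗ qE eⱼ'`, indexed by `(σ × ι') ⊕ (ι × σ')`; as `κ` is infinite, both index
sets have fewer than `κ` elements. That these relations suffice is shown by building the inverse
map from `T ⊗_R E` to the presented module `Q` through the tensor-hom adjunction, as an
`Rᵐᵒᵖ`-linear map `T → Hom_S(E, Q)` that descends from the free cover of `T`. -/

open CategoryTheory TensorProduct

universe u

set_option maxHeartbeats 1000000
noncomputable section

namespace NCT

variable (R : Type u) [Ring R]

/-- The subgroup of relations defining the balanced tensor product `M ⊗_R N`
of a right `R`-module `M` and a left `R`-module `N`. -/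
def rel (M N : Type u) [AddCommGroup M] [Module Rᵐᵒᵖ M] [AddCommGroup N] [Module R N] :
    AddSubgroup (M ⊗[ℤ] N) :=
  AddSubgroup.closure {x | ∃ (r : R) (m : M) (n : N),
    x = (MulOpposite.op r • m) ⊗ₜ[ℤ] n - m ⊗ₜ[ℤ] (r • n)}

/-- The balanced tensor product `M ⊗_R N` over a (possibly noncommutative) ring `R`. -/
def Tens (M N : Type u) [AddCommGroup M] [Module Rᵐᵒᵖ M] [AddCommGroup N] [Module R N] :
    Type u :=
  (M ⊗[ℤ] N) ⧸ rel R M N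

instance (M N : Type u) [AddCommGroup M] [Module Rᵐᵒᵖ M] [AddCommGroup N] [Module R N] :
    AddCommGroup (Tens R M N) :=
  inferInstanceAs (AddCommGroup ((M ⊗[ℤ] N) ⧸ rel R M N))

variable {R}

variable {M M' M'' N N' N'' : Type u}
  [AddCommGroup M] [Module Rᵐᵒᵖ M] [AddCommGroup M'] [Module Rᵐᵒᵖ M']
  [AddCommGroup M''] [Module Rᵐᵒᵖ M'']
  [AddCommGroup N] [Module R N] [AddCommGroup N'] [Module R N']
  [AddCommGroup N''] [Module R N'']

/-- The canonical projection. -/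
def mk : M ⊗[ℤ] N →+ Tens R M N := QuotientAddGroup.mk' (rel R M N)

lemma mk_surjective : Function.Surjective (mk (R := R) (M := M) (N := N)) :=
  QuotientAddGroup.mk'_surjective _

private def intMap (f : M →ₗ[Rᵐᵒᵖ] M') (g : N →ₗ[R] N') : M ⊗[ℤ] N →ₗ[ℤ] M' ⊗[ℤ] N' :=
  TensorProduct.map f.toAddMonoidHom.toIntLinearMap g.toAddMonoidHom.toIntLinearMap

private lemma intMap_id :
    intMap (LinearMap.id : M →ₗ[Rᵐᵒᵖ] M) (LinearMap.id : N →ₗ[R] N) = LinearMap.id :=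
  TensorProduct.ext' fun _ _ => rfl

private lemma intMap_comp (f' : M' →ₗ[Rᵐᵒᵖ] M'') (f : M →ₗ[Rᵐᵒᵖ] M')
    (g' : N' →ₗ[R] N'') (g : N →ₗ[R] N') :
    intMap (f'.comp f) (g'.comp g) = (intMap f' g').comp (intMap f g) :=
  TensorProduct.ext' fun _ _ => rfl

private lemma rel_le (f : M →ₗ[Rᵐᵒᵖ] M') (g : N →ₗ[R] N') :
    rel R M N ≤ (rel R M' N').comap (intMap f g).toAddMonoidHom := by
  rw [rel, AddSubgroup.closure_le]
  rintro x ⟨r, m, n, rfl⟩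
  simp only [SetLike.mem_coe, AddSubgroup.mem_comap, LinearMap.toAddMonoidHom_coe, map_sub]
  apply AddSubgroup.subset_closure
  refine ⟨r, f m, g n, ?_⟩
  show f (MulOpposite.op r • m) ⊗ₜ[ℤ] g n - f m ⊗ₜ[ℤ] g (r • n) = _
  simp [f.map_smul, g.map_smul]

/-- Functoriality of the balanced tensor product. -/
def tmap (f : M →ₗ[Rᵐᵒᵖ] M') (g : N →ₗ[R] N') : Tens R M N →+ Tens R M' N' :=
  QuotientAddGroup.map _ _ (intMap f g).toAddMonoidHom (rel_le f g)

lemma tmap_mk (f : M →ₗ[Rᵐᵒᵖ] M') (g : N →ₗ[R] N') (x : M ⊗[ℤ] N) :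
    tmap f g (mk x) = mk (intMap f g x) := rfl

lemma tmap_id_apply (x : Tens R M N) :
    tmap (LinearMap.id : M →ₗ[Rᵐᵒᵖ] M) (LinearMap.id : N →ₗ[R] N) x = x := by
  obtain ⟨y, rfl⟩ := mk_surjective x
  rw [tmap_mk, intMap_id]
  rfl

lemma tmap_tmap (f' : M' →ₗ[Rᵐᵒᵖ] M'') (f : M →ₗ[Rᵐᵒᵖ] M')
    (g' : N' →ₗ[R] N'') (g : N →ₗ[R] N') (x : Tens R M N) :
    tmap f' g' (tmap f g x) = tmap (f'.comp f) (g'.comp g) x := by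
  obtain ⟨y, rfl⟩ := mk_surjective x
  rw [tmap_mk, tmap_mk, tmap_mk, intMap_comp]
  rfl

lemma tmap_add_left (f₁ f₂ : M →ₗ[Rᵐᵒᵖ] M') (g : N →ₗ[R] N') :
    tmap (f₁ + f₂) g = tmap f₁ g + tmap f₂ g := by
  ext x
  obtain ⟨y, rfl⟩ := mk_surjective x
  have h : intMap (f₁ + f₂) g = intMap f₁ g + intMap f₂ g := by
    apply TensorProduct.ext'
    intro m n
    show (f₁ + f₂) m ⊗ₜ[ℤ] g n = f₁ m ⊗ₜ[ℤ] g n + f₂ m ⊗ₜ[ℤ] g n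
    simp [intMap, add_tmul]
  simp only [AddMonoidHom.add_apply, tmap_mk, h, LinearMap.add_apply]
  rw [map_add]

lemma tmap_add_right (f : M →ₗ[Rᵐᵒᵖ] M') (g₁ g₂ : N →ₗ[R] N') :
    tmap f (g₁ + g₂) = tmap f g₁ + tmap f g₂ := by
  ext x
  obtain ⟨y, rfl⟩ := mk_surjective x
  have h : intMap f (g₁ + g₂) = intMap f g₁ + intMap f g₂ := by
    apply TensorProduct.ext'
    intro m n
    show f m ⊗ₜ[ℤ] (g₁ + g₂) n = f m ⊗ₜ[ℤ] g₁ n + f m ⊗ₜ[ℤ] g₂ n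
    simp [intMap, tmul_add]
  simp only [AddMonoidHom.add_apply, tmap_mk, h, LinearMap.add_apply]
  rw [map_add]


lemma tmap_zero_left (g : N →ₗ[R] N') :
    tmap (0 : M →ₗ[Rᵐᵒᵖ] M') g = 0 := by
  ext x
  obtain ⟨y, rfl⟩ := mk_surjective x
  have h : intMap (0 : M →ₗ[Rᵐᵒᵖ] M') g = 0 := by
    apply TensorProduct.ext'
    intro m n
    show (0 : M →ₗ[Rᵐᵒᵖ] M') m ⊗ₜ[ℤ] g n = 0
    simp [intMap]
  rw [tmap_mk, h]
  rfl

lemma tmap_zero_right (f : M →ₗ[Rᵐᵒᵖ] M') :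
    tmap f (0 : N →ₗ[R] N') = 0 := by
  ext x
  obtain ⟨y, rfl⟩ := mk_surjective x
  have h : intMap f (0 : N →ₗ[R] N') = 0 := by
    apply TensorProduct.ext'
    intro m n
    show f m ⊗ₜ[ℤ] (0 : N →ₗ[R] N') n = 0
    simp [intMap]
  rw [tmap_mk, h]
  rfl

variable (R)

/-- The balanced tensor product, as a bifunctor on module categories. -/
def tensorBifunctor : ModuleCat.{u} Rᵐᵒᵖ ⥤ ModuleCat.{u} R ⥤ AddCommGrpCat.{u} where
  obj M :=
    { obj := fun N => AddCommGrpCat.of (Tens R M N)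
      map := fun g => AddCommGrpCat.ofHom (tmap LinearMap.id g.hom)
      map_id := fun N => by
        ext x
        exact tmap_id_apply x
      map_comp := fun g g' => by
        ext x
        show tmap LinearMap.id (LinearMap.comp g'.hom g.hom) x
          = tmap LinearMap.id g'.hom (tmap LinearMap.id g.hom x)
        rw [tmap_tmap, LinearMap.id_comp] }
  map f :=
    { app := fun N => AddCommGrpCat.ofHom (tmap f.hom LinearMap.id)
      naturality := fun N N' g => by
        ext x
        show tmap f.hom LinearMap.id (tmap LinearMap.id g.hom x)
          = tmap LinearMap.id g.hom (tmap f.hom LinearMap.id x)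
        rw [tmap_tmap, tmap_tmap, LinearMap.id_comp, LinearMap.comp_id,
          LinearMap.id_comp, LinearMap.comp_id] }
  map_id := fun M => by
    ext N x
    exact tmap_id_apply x
  map_comp := fun f f' => by
    ext N x
    show tmap (LinearMap.comp f'.hom f.hom) LinearMap.id x
      = tmap f'.hom LinearMap.id (tmap f.hom LinearMap.id x)
    rw [tmap_tmap, LinearMap.id_comp]

instance (M : ModuleCat.{u} Rᵐᵒᵖ) : ((tensorBifunctor R).obj M).Additive where
  map_add := by
    intro N N' g g'
    ext x
    show tmap LinearMap.id (g + g').hom x = _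
    rw [ModuleCat.hom_add, tmap_add_right]
    rfl

instance (N : ModuleCat.{u} R) : ((tensorBifunctor R).flip.obj N).Additive where
  map_add := by
    intro M M' f f'
    ext x
    show tmap (f + f').hom LinearMap.id x = _
    rw [ModuleCat.hom_add, tmap_add_left]
    rfl


instance : (tensorBifunctor R).PreservesZeroMorphisms where
  map_zero := by
    intro M M'
    ext N x
    show tmap (0 : ↑M →ₗ[Rᵐᵒᵖ] ↑M') LinearMap.id x = 0
    rw [tmap_zero_left]
    rfl

/-- A right `R`-module `M` is flat if `M ⊗_R -` preserves injectivity. -/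
def FlatRight (M : Type u) [AddCommGroup M] [Module Rᵐᵒᵖ M] : Prop :=
  ∀ (N N' : Type u) [AddCommGroup N] [Module R N] [AddCommGroup N'] [Module R N']
    (g : N →ₗ[R] N'), Function.Injective g →
      Function.Injective (tmap (LinearMap.id : M →ₗ[Rᵐᵒᵖ] M) g)

/-- A left `R`-module `N` is flat if `- ⊗_R N` preserves injectivity. -/
def FlatLeft (N : Type u) [AddCommGroup N] [Module R N] : Prop :=
  ∀ (M M' : Type u) [AddCommGroup M] [Module Rᵐᵒᵖ M] [AddCommGroup M'] [Module Rᵐᵒᵖ M']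
    (f : M →ₗ[Rᵐᵒᵖ] M'), Function.Injective f →
      Function.Injective (tmap f (LinearMap.id : N →ₗ[R] N))

end NCT

open CategoryTheory

section

variable (R : Type u) [Ring R] (S : Type u) [Ring S]
variable (E : Type u) [AddCommGroup E] [Module R E] [Module Sᵐᵒᵖ E] [SMulCommClass R Sᵐᵒᵖ E]

/-- Right multiplication by `s ∈ S` on an `R`-`S`-bimodule `E`, as an `R`-linear map. -/
def rightMulLin (s : Sᵐᵒᵖ) : E →ₗ[R] E where
  toFun e := s • e
  map_add' := smul_add s
  map_smul' r e := (smul_comm r s e).symm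

lemma rightMulLin_one : rightMulLin R S E (1 : Sᵐᵒᵖ) = LinearMap.id := by
  ext e; simp [rightMulLin]

lemma rightMulLin_mul (s t : Sᵐᵒᵖ) :
    rightMulLin R S E (s * t) = (rightMulLin R S E s).comp (rightMulLin R S E t) := by
  ext e; simp [rightMulLin, mul_smul]

lemma rightMulLin_add (s t : Sᵐᵒᵖ) :
    rightMulLin R S E (s + t) = rightMulLin R S E s + rightMulLin R S E t := by
  ext e; simp [rightMulLin, add_smul]

lemma rightMulLin_zero : rightMulLin R S E (0 : Sᵐᵒᵖ) = 0 := by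
  ext e; simp [rightMulLin]

variable (T : Type u) [AddCommGroup T] [Module Rᵐᵒᵖ T]

/-- The right `S`-module structure on the balanced tensor product `T ⊗_R E` of a right
`R`-module `T` with an `R`-`S`-bimodule `E`. -/
noncomputable instance tensRightModule : Module Sᵐᵒᵖ (NCT.Tens R T E) where
  smul s x := NCT.tmap LinearMap.id (rightMulLin R S E s) x
  one_smul x := by
    show NCT.tmap LinearMap.id (rightMulLin R S E 1) x = x
    rw [rightMulLin_one]
    exact NCT.tmap_id_apply x
  mul_smul s t x := by
    show NCT.tmap LinearMap.id (rightMulLin R S E (s * t)) x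
      = NCT.tmap LinearMap.id (rightMulLin R S E s)
        (NCT.tmap LinearMap.id (rightMulLin R S E t) x)
    rw [NCT.tmap_tmap, rightMulLin_mul, LinearMap.id_comp]
  smul_zero s := map_zero _
  smul_add s x y := map_add _ x y
  add_smul s t x := by
    show NCT.tmap LinearMap.id (rightMulLin R S E (s + t)) x = _
    rw [rightMulLin_add, NCT.tmap_add_right]
    rfl
  zero_smul x := by
    show NCT.tmap LinearMap.id (rightMulLin R S E 0) x = 0
    rw [rightMulLin_zero, NCT.tmap_zero_right]
    rfl

end

/-- A module is `κ`-presentable if it is the cokernel of a morphism of free modules each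
with fewer than `κ` generators. -/
def IsKappaPresentableMod (κ : Cardinal.{u}) (A : Type u) [Ring A] (M : Type u)
    [AddCommGroup M] [Module A M] : Prop :=
  ∃ (ι σ : Type u) (_ : Cardinal.mk ι < κ) (_ : Cardinal.mk σ < κ)
    (f : (ι →₀ A) →ₗ[A] (σ →₀ A)),
    Nonempty (M ≃ₗ[A] ((σ →₀ A) ⧸ LinearMap.range f))

namespace NCT

open MulOpposite

section UniversalProperty

variable {R : Type u} [Ring R] {M N : Type u}
  [AddCommGroup M] [Module Rᵐᵒᵖ M] [AddCommGroup N] [Module R N]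

lemma mk_op_smul_tmul (r : R) (m : M) (n : N) :
    mk (R := R) ((op r • m) ⊗ₜ[ℤ] n) = mk (m ⊗ₜ[ℤ] (r • n)) := by
  rw [← sub_eq_zero, ← map_sub]
  exact (QuotientAddGroup.eq_zero_iff _).2 (AddSubgroup.subset_closure ⟨r, m, n, rfl⟩)

@[elab_as_elim]
lemma induction_on {P : Tens R M N → Prop} (x : Tens R M N) (zero : P 0)
    (tmul : ∀ m n, P (mk (R := R) (m ⊗ₜ[ℤ] n))) (add : ∀ x y, P x → P y → P (x + y)) : P x := by
  obtain ⟨y, rfl⟩ := mk_surjective x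
  induction y with
  | zero => simpa using zero
  | tmul m n => exact tmul m n
  | add y z hy hz => rw [map_add]; exact add _ _ hy hz

variable {A : Type*} [AddCommGroup A]

def lift (B : M →+ N →+ A) (hB : ∀ (r : R) m n, B (op r • m) n = B m (r • n)) :
    Tens R M N →+ A :=
  QuotientAddGroup.lift _ (TensorProduct.liftAddHom B fun _ _ _ => by simp) <| by
    refine (AddSubgroup.closure_le _).2 ?_
    rintro _ ⟨r, m, n, rfl⟩
    simp [hB]

@[simp]
lemma lift_mk_tmul (B : M →+ N →+ A) (hB : ∀ (r : R) m n, B (op r • m) n = B m (r • n))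
    (m : M) (n : N) : lift B hB (mk (R := R) (m ⊗ₜ[ℤ] n)) = B m n :=
  TensorProduct.liftAddHom_tmul (R := ℤ) _ (fun _ _ _ => by simp) m n

end UniversalProperty

section RightModule

variable {R : Type u} [Ring R] {S : Type u} [Ring S]
  {T : Type u} [AddCommGroup T] [Module Rᵐᵒᵖ T]
  {E : Type u} [AddCommGroup E] [Module R E] [Module Sᵐᵒᵖ E] [SMulCommClass R Sᵐᵒᵖ E]

lemma smul_mk_tmul (s : Sᵐᵒᵖ) (t : T) (e : E) :
    s • mk (R := R) (t ⊗ₜ[ℤ] e) = mk (t ⊗ₜ[ℤ] (s • e)) :=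
  rfl

variable {Q : Type u} [AddCommGroup Q] [Module Sᵐᵒᵖ Q]

def liftₗ (B : T →+ E →+ Q) (hB : ∀ (r : R) t e, B (op r • t) e = B t (r • e))
    (hS : ∀ (s : Sᵐᵒᵖ) t e, B t (s • e) = s • B t e) : Tens R T E →ₗ[Sᵐᵒᵖ] Q where
  __ := lift B hB
  map_smul' s x := by
    induction x using induction_on with
    | zero => simp
    | tmul t e => simp [smul_mk_tmul, hS]
    | add x y hx hy => simp_all [smul_add]

@[simp]
lemma liftₗ_mk_tmul (B : T →+ E →+ Q) (hB : ∀ (r : R) t e, B (op r • t) e = B t (r • e))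
    (hS : ∀ (s : Sᵐᵒᵖ) t e, B t (s • e) = s • B t e) (t : T) (e : E) :
    liftₗ B hB hS (mk (R := R) (t ⊗ₜ[ℤ] e)) = B t e :=
  lift_mk_tmul B hB t e

end RightModule

section DomModule

variable (R : Type u) [Ring R] {S : Type u} [Ring S]
  (E : Type u) [AddCommGroup E] [Module R E] [Module Sᵐᵒᵖ E] [SMulCommClass R Sᵐᵒᵖ E]
  (Q : Type u) [AddCommGroup Q] [Module Sᵐᵒᵖ Q]

/-- The right `R`-module `Hom_S(E, Q)` of the tensor-hom adjunction. Not a global instance: it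
would clash with `LinearMap.module` whenever `Rᵐᵒᵖ` acts on `Q`. -/
abbrev domModule : Module Rᵐᵒᵖ (E →ₗ[Sᵐᵒᵖ] Q) :=
  haveI := SMulCommClass.symm R Sᵐᵒᵖ E
  inferInstanceAs (Module Rᵈᵐᵃ (E →ₗ[Sᵐᵒᵖ] Q))

attribute [local instance] domModule

variable {R E Q} in
lemma op_smul_linearMap_apply (r : R) (φ : E →ₗ[Sᵐᵒᵖ] Q) (e : E) :
    (op r • φ) e = φ (r • e) :=
  rfl

end DomModule

end NCT

namespace LinearMap

variable {A : Type*} [Ring A] {M N P : Type*} [AddCommGroup M] [AddCommGroup N] [AddCommGroup P]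
  [Module A M] [Module A N] [Module A P]

def descend (q : M →ₗ[A] N) (hq : Function.Surjective q) (φ : M →ₗ[A] P) (h : ker q ≤ ker φ) :
    N →ₗ[A] P :=
  (ker q).liftQ φ h ∘ₗ (q.quotKerEquivOfSurjective hq).symm.toLinearMap

@[simp]
lemma descend_apply (q : M →ₗ[A] N) (hq : Function.Surjective q) (φ : M →ₗ[A] P)
    (h : ker q ≤ ker φ) (m : M) : q.descend hq φ h (q m) = φ m := by
  simp [descend]

end LinearMap

section Presentation

open Cardinal

variable {κ : Cardinal.{u}} {A : Type u} [Ring A] {M : Type u} [AddCommGroup M] [Module A M]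

lemma IsKappaPresentableMod.exists_surjective_ker_eq_range (h : IsKappaPresentableMod κ A M) :
    ∃ (ι σ : Type u) (_ : #ι < κ) (_ : #σ < κ) (f : (ι →₀ A) →ₗ[A] (σ →₀ A))
      (q : (σ →₀ A) →ₗ[A] M), Function.Surjective q ∧ LinearMap.ker q = LinearMap.range f := by
  obtain ⟨ι, σ, hι, hσ, f, ⟨e⟩⟩ := h
  refine ⟨ι, σ, hι, hσ, f, e.symm.toLinearMap ∘ₗ (LinearMap.range f).mkQ,
    e.symm.surjective.comp (Submodule.mkQ_surjective _), ?_⟩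
  rw [LinearMap.ker_comp, LinearEquiv.ker, Submodule.comap_bot, Submodule.ker_mkQ]

lemma IsKappaPresentableMod.of_ker_eq_span {σ ρ : Type u} (hσ : #σ < κ) (hρ : #ρ < κ)
    (q : (σ →₀ A) →ₗ[A] M) (hq : Function.Surjective q) (v : ρ → σ →₀ A)
    (hv : LinearMap.ker q = Submodule.span A (Set.range v)) : IsKappaPresentableMod κ A M :=
  ⟨ρ, σ, hρ, hσ, Finsupp.linearCombination A v, ⟨(q.quotKerEquivOfSurjective hq).symm.trans
    (Submodule.quotEquivOfEq _ _ (by rw [Finsupp.range_linearCombination, hv]))⟩⟩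

end Presentation

namespace NCT.TensorPresentation

open Finsupp Function MulOpposite

variable {R : Type u} [Ring R] {S : Type u} [Ring S]
  {T : Type u} [AddCommGroup T] [Module Rᵐᵒᵖ T]
  {E : Type u} [AddCommGroup E] [Module R E] [Module Sᵐᵒᵖ E]
  {ι σ ι' σ' : Type u}
  {qT : (σ →₀ Rᵐᵒᵖ) →ₗ[Rᵐᵒᵖ] T} {qE : (σ' →₀ Sᵐᵒᵖ) →ₗ[Sᵐᵒᵖ] E}
  (f : (ι →₀ Rᵐᵒᵖ) →ₗ[Rᵐᵒᵖ] (σ →₀ Rᵐᵒᵖ)) (g : (ι' →₀ Sᵐᵒᵖ) →ₗ[Sᵐᵒᵖ] (σ' →₀ Sᵐᵒᵖ))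

variable (S σ') in
def rowIncl (j : σ) : (σ' →₀ Sᵐᵒᵖ) →ₗ[Sᵐᵒᵖ] (σ × σ' →₀ Sᵐᵒᵖ) :=
  lmapDomain Sᵐᵒᵖ Sᵐᵒᵖ (Prod.mk j)

/-- Not additive in `u` or `e`, since `surjInv` is not; only its class modulo the relations is. -/
def preimageTmul (hqE : Surjective qE) (u : σ →₀ Rᵐᵒᵖ) (e : E) : σ × σ' →₀ Sᵐᵒᵖ :=
  u.sum fun j r => rowIncl S σ' j (surjInv hqE (r.unop • e))

def relations (hqE : Surjective qE) : (σ × ι') ⊕ (ι × σ') → σ × σ' →₀ Sᵐᵒᵖ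
  | .inl (j, i') => rowIncl S σ' j (g (single i' 1))
  | .inr (i, j') => preimageTmul hqE (f (single i 1)) (qE (single j' 1))

variable (hqE : Surjective qE) (hkerE : LinearMap.ker qE = LinearMap.range g)

local notation "Q" => (σ × σ' →₀ Sᵐᵒᵖ) ⧸ Submodule.span Sᵐᵒᵖ (Set.range (relations f g hqE))

def rowQuot (j : σ) : E →ₗ[Sᵐᵒᵖ] Q :=
  qE.descend hqE ((Submodule.span Sᵐᵒᵖ (Set.range (relations f g hqE))).mkQ ∘ₗ rowIncl S σ' j) <| by
    rw [hkerE, LinearMap.range_le_ker_iff]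
    refine lhom_ext' fun i' => LinearMap.ext_ring ?_
    simp only [LinearMap.comp_apply, lsingle_apply, Submodule.mkQ_apply, LinearMap.zero_apply,
      Submodule.Quotient.mk_eq_zero]
    exact Submodule.subset_span ⟨.inl (j, i'), rfl⟩

lemma rowQuot_apply (j : σ) (v : σ' →₀ Sᵐᵒᵖ) :
    rowQuot f g hqE hkerE j (qE v) = Submodule.Quotient.mk (rowIncl S σ' j v) :=
  LinearMap.descend_apply ..

variable [SMulCommClass R Sᵐᵒᵖ E]

variable (qT qE) in
def cover : (σ × σ' →₀ Sᵐᵒᵖ) →ₗ[Sᵐᵒᵖ] Tens R T E :=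
  linearCombination Sᵐᵒᵖ fun p => mk (R := R) (qT (single p.1 1) ⊗ₜ[ℤ] qE (single p.2 1))

lemma cover_rowIncl (j : σ) (v : σ' →₀ Sᵐᵒᵖ) :
    cover qT qE (rowIncl S σ' j v) = mk (R := R) (qT (single j 1) ⊗ₜ[ℤ] qE v) := by
  induction v using Finsupp.induction_linear with
  | zero => simp
  | add v w hv hw => simp [hv, hw, TensorProduct.tmul_add]
  | single j' s =>
    rw [rowIncl, lmapDomain_apply, mapDomain_single, cover, linearCombination_single,
      smul_mk_tmul, ← map_smul, smul_single, smul_eq_mul, mul_one]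

lemma cover_preimageTmul (u : σ →₀ Rᵐᵒᵖ) (e : E) :
    cover qT qE (preimageTmul hqE u e) = mk (R := R) (qT u ⊗ₜ[ℤ] e) := by
  let h : (σ →₀ Rᵐᵒᵖ) →+ Tens R T E :=
    (mk (R := R)).comp (((TensorProduct.mk ℤ T E).flip e).toAddMonoidHom.comp qT.toAddMonoidHom)
  have hsingle (j : σ) (r : Rᵐᵒᵖ) :
      cover qT qE (rowIncl S σ' j (surjInv hqE (r.unop • e))) = h (single j r) := by
    rw [cover_rowIncl, surjInv_eq hqE, ← mk_op_smul_tmul, op_unop, ← map_smul, smul_single,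
      smul_eq_mul, mul_one]
    rfl
  calc cover qT qE (preimageTmul hqE u e)
      = u.sum fun j r => h (single j r) := by
        rw [preimageTmul, map_finsuppSum]
        exact sum_congr fun j _ => hsingle j _
    _ = mk (R := R) (qT u ⊗ₜ[ℤ] e) := by
        rw [← map_finsuppSum, sum_single]
        rfl

lemma cover_surjective (hqT : Surjective qT) (hqE : Surjective qE) :
    Surjective (cover qT qE) := by
  intro x
  induction x using induction_on with
  | zero => exact ⟨0, map_zero _⟩
  | tmul t e =>
    obtain ⟨u, rfl⟩ := hqT t
    exact ⟨preimageTmul hqE u e, cover_preimageTmul hqE u e⟩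
  | add x y hx hy =>
    obtain ⟨a, rfl⟩ := hx
    obtain ⟨b, rfl⟩ := hy
    exact ⟨a + b, map_add _ a b⟩

lemma span_relations_le_ker_cover (hkerT : LinearMap.ker qT = LinearMap.range f)
    (hkerE : LinearMap.ker qE = LinearMap.range g) :
    Submodule.span Sᵐᵒᵖ (Set.range (relations f g hqE)) ≤ LinearMap.ker (cover qT qE) := by
  rw [Submodule.span_le]
  rintro _ ⟨⟨j, i'⟩ | ⟨i, j'⟩, rfl⟩
  · have : qE (g (single i' 1)) = 0 := by
      rw [← LinearMap.mem_ker, hkerE]; exact LinearMap.mem_range_self g _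
    simp [relations, cover_rowIncl, this]
  · have : qT (f (single i 1)) = 0 := by
      rw [← LinearMap.mem_ker, hkerT]; exact LinearMap.mem_range_self f _
    simp [relations, cover_preimageTmul, this]

attribute [local instance] domModule

def curriedInv₀ : (σ →₀ Rᵐᵒᵖ) →ₗ[Rᵐᵒᵖ] (E →ₗ[Sᵐᵒᵖ] Q) :=
  linearCombination Rᵐᵒᵖ (rowQuot f g hqE hkerE)

lemma curriedInv₀_apply (u : σ →₀ Rᵐᵒᵖ) (e : E) :
    curriedInv₀ f g hqE hkerE u e = Submodule.Quotient.mk (preimageTmul hqE u e) := by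
  rw [curriedInv₀, linearCombination_apply, LinearMap.finsupp_sum_apply, preimageTmul,
    ← Submodule.mkQ_apply, map_finsuppSum]
  refine sum_congr fun j _ => ?_
  rw [← op_unop (u j), op_smul_linearMap_apply, Submodule.mkQ_apply, ← rowQuot_apply f g hqE hkerE,
    surjInv_eq hqE, op_unop]

lemma ker_le_ker_curriedInv₀ (hkerT : LinearMap.ker qT = LinearMap.range f) :
    LinearMap.ker qT ≤ LinearMap.ker (curriedInv₀ f g hqE hkerE) := by
  rw [hkerT, LinearMap.range_le_ker_iff]
  refine lhom_ext' fun i => LinearMap.ext_ring ?_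
  refine (LinearMap.cancel_right hqE).1 (lhom_ext' fun j' => LinearMap.ext_ring ?_)
  simp only [LinearMap.comp_apply, lsingle_apply, LinearMap.zero_apply, curriedInv₀_apply,
    Submodule.Quotient.mk_eq_zero]
  exact Submodule.subset_span ⟨.inr (i, j'), rfl⟩

def curriedInv (hqT : Surjective qT) (hkerT : LinearMap.ker qT = LinearMap.range f) :
    T →ₗ[Rᵐᵒᵖ] (E →ₗ[Sᵐᵒᵖ] Q) :=
  qT.descend hqT (curriedInv₀ f g hqE hkerE) (ker_le_ker_curriedInv₀ f g hqE hkerE hkerT)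

def coverInv (hqT : Surjective qT) (hkerT : LinearMap.ker qT = LinearMap.range f) :
    Tens R T E →ₗ[Sᵐᵒᵖ] Q :=
  liftₗ (LinearMap.toAddMonoidHom'.comp (curriedInv f g hqE hkerE hqT hkerT).toAddMonoidHom)
    (fun r t e => by simp [← op_smul_linearMap_apply])
    (fun s t e => (curriedInv f g hqE hkerE hqT hkerT t).map_smul s e)

lemma coverInv_cover (hqT : Surjective qT) (hkerT : LinearMap.ker qT = LinearMap.range f)
    (x : σ × σ' →₀ Sᵐᵒᵖ) :
    coverInv f g hqE hkerE hqT hkerT (cover qT qE x) = Submodule.Quotient.mk x := by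
  suffices h : coverInv f g hqE hkerE hqT hkerT ∘ₗ cover qT qE = Submodule.mkQ _ from
    LinearMap.congr_fun h x
  refine lhom_ext' fun ⟨j, j'⟩ => LinearMap.ext_ring ?_
  simp [cover, coverInv, curriedInv, curriedInv₀, rowQuot_apply, rowIncl]

lemma ker_cover (hqT : Surjective qT) (hkerT : LinearMap.ker qT = LinearMap.range f)
    (hkerE : LinearMap.ker qE = LinearMap.range g) :
    LinearMap.ker (cover qT qE) = Submodule.span Sᵐᵒᵖ (Set.range (relations f g hqE)) := by
  refine le_antisymm (fun x hx => ?_) (span_relations_le_ker_cover f g hqE hkerT hkerE)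
  rw [← Submodule.Quotient.mk_eq_zero, ← coverInv_cover f g hqE hkerE hqT hkerT,
    LinearMap.mem_ker.1 hx, map_zero]

end NCT.TensorPresentation

/-- **Tensor products of `κ`-presentable modules are `κ`-presentable.**
Let `R` and `S` be rings, `T` a right `R`-module, `E` an `R`-`S`-bimodule, and `κ` a
regular cardinal.  If `T` is `κ`-presentable as a right `R`-module and `E` is
`κ`-presentable as a right `S`-module, then the right `S`-module `T ⊗_R E` is
`κ`-presentable. -/
theorem tensor_kappa_presentable
    (R : Type u) [Ring R] (S : Type u) [Ring S]
    (T : Type u) [AddCommGroup T] [Module Rᵐᵒᵖ T]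
    (E : Type u) [AddCommGroup E] [Module R E] [Module Sᵐᵒᵖ E] [SMulCommClass R Sᵐᵒᵖ E]
    (κ : Cardinal.{u}) (hκ : κ.IsRegular)
    (hT : IsKappaPresentableMod κ Rᵐᵒᵖ T)
    (hE : IsKappaPresentableMod κ Sᵐᵒᵖ E) :
    IsKappaPresentableMod κ Sᵐᵒᵖ (NCT.Tens R T E) := by
  open NCT.TensorPresentation Cardinal in
  obtain ⟨ι, σ, hι, hσ, f, qT, hqT, hkerT⟩ := hT.exists_surjective_ker_eq_range
  obtain ⟨ι', σ', hι', hσ', g, qE, hqE, hkerE⟩ := hE.exists_surjective_ker_eq_range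
  have hκ₀ := hκ.aleph0_le
  have hgen : #(σ × σ') < κ := by simpa using mul_lt_of_lt hκ₀ hσ hσ'
  have hrel : #((σ × ι') ⊕ (ι × σ')) < κ := by
    simpa using add_lt_of_lt hκ₀ (mul_lt_of_lt hκ₀ hσ hι') (mul_lt_of_lt hκ₀ hι hσ')
  exact .of_ker_eq_span hgen hrel (cover qT qE) (cover_surjective hqT hqE) (relations f g hqE)
    (ker_cover f g hqE hqT hkerT hkerE)
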